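/- Let H0, H* ∈ H^stub_s(d) with E(M(H0 Δ H*)) = k+1 ≥ 5, and suppose M(H0 Δ H*) consists of exactly one minimal alternating cycle C* containing an alternating subtrail (e1, e2, e3) with e1 = {a,b}_{H0,t}, e2 = {b,c}_{H*,t}, e3 = {c,d}_{H0,s} and a ≠ d. If the hyperarc (s,{a,d}) belongs to neither A(H0) nor A(H*), then the hypergraph H̃ with A(H̃) = (A(H0) \ {M⁻¹(e1), M⁻¹(e3)}) ∪ {M⁻¹(e2), (s,{a,d})} satisfies: H̃ ∈ H^stub_s(d), E(M(H0 Δ H̃)) ≤ k, and E(M(H̃ Δ H*)) = k−1. -/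

import Mathlib

open Finset

/-!
Common setting: fix a vertex set `V` and two tail labels `τ, σ`, encoded as
`Bool` with `true = τ` and `false = σ`.  A hyperarc is a pair `(t, {a,b})`
consisting of a tail label and an unordered pair of vertices; it is degenerate
if `a = b`.  A hypergraph is a finite set of pairwise distinct non-degenerate
hyperarcs; `H^stub_s(d)` is the set of such hypergraphs realizing the degree
sequence `d` (stub degree of each vertex and number of hyperarcs per tail).
`M(H0 Δ H*)` is the edge-labeled multigraph whose edges record the hyperarcs
of the symmetric difference together with the hypergraph (`lab`, `true = H0`)
containing them and their tail.
-/

/-- Tail labels: `true = τ`, `false = σ`. -/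
abbrev Tail := Bool

/-- A hyperarc: a tail label together with an unordered pair of vertices. -/
abbrev Hyperarc (V : Type*) := Tail × Sym2 V

/-- A (stub) degree sequence: the stub degree of every vertex together with the
number of hyperarcs carrying each tail label. -/
structure DegreeSeq (V : Type*) where
  vdeg : V → ℕ
  tdeg : Tail → ℕ

/-- `A` is a hypergraph in `H^stub_s(d)`: a set of pairwise distinct (this is
automatic for a `Finset`) non-degenerate hyperarcs realizing the degree
sequence `D`. -/
def Realizes {V : Type*} [DecidableEq V] (A : Finset (Hyperarc V)) (D : DegreeSeq V) : Prop :=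
  (∀ e ∈ A, ¬ e.2.IsDiag) ∧
  (∀ v : V, (A.filter fun e => v ∈ e.2).card = D.vdeg v) ∧
  (∀ t : Tail, (A.filter fun e => e.1 = t).card = D.tdeg t)

/-- An edge `{a,b}_{X,t}` of the multigraph `M(H0 Δ H*)`: its label (`true`
means it comes from `H0`, `false` from `H*`), its tail `t` and its endpoints
`{a,b}`. -/
structure MEdge (V : Type*) where
  lab : Bool
  tail : Tail
  ends : Sym2 V
deriving DecidableEq

/-- `M⁻¹`: the hyperarc underlying an edge of `M(H0 Δ H*)`. -/
def MEdge.arc {V : Type*} (e : MEdge V) : Hyperarc V := (e.tail, e.ends)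

/-- The edge set of the edge-labeled multigraph `M(H0 Δ H*)`: every hyperarc of
`A(H0) \ A(H*)` becomes an edge labeled `H0` (i.e. `true`) and every hyperarc of
`A(H*) \ A(H0)` becomes an edge labeled `H*` (i.e. `false`). -/
def mEdges {V : Type*} [DecidableEq V] (A0 A1 : Finset (Hyperarc V)) : Finset (MEdge V) :=
  ((A0 \ A1).image fun h => ⟨true, h.1, h.2⟩) ∪
    ((A1 \ A0).image fun h => ⟨false, h.1, h.2⟩)

/-- An alternating cycle in the edge set `E` of `M(H0 Δ H*)`: a closed trail
(cyclic sequence of pairwise distinct edges, consecutive edges sharing an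
endpoint) whose edges alternate between label `H0` and label `H*`. -/
structure AltCycle {V : Type*} (E : Finset (MEdge V)) where
  /-- the length of the cycle -/
  n : ℕ
  two_le : 2 ≤ n
  /-- the cyclic sequence of edges -/
  edge : ℕ → MEdge V
  /-- the cyclic sequence of vertices visited -/
  vert : ℕ → V
  edge_periodic : ∀ i, edge (i + n) = edge i
  vert_periodic : ∀ i, vert (i + n) = vert i
  mem : ∀ i, edge i ∈ E
  inj : ∀ i < n, ∀ j < n, edge i = edge j → i = j
  ends_eq : ∀ i, (edge i).ends = s(vert i, vert (i + 1))
  alt : ∀ i, (edge i).lab = !(edge (i + 1)).lab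

/-- The set of edges used by an alternating cycle. -/
def AltCycle.edges {V : Type*} [DecidableEq V] {E : Finset (MEdge V)} (C : AltCycle E) :
    Finset (MEdge V) :=
  (Finset.range C.n).image C.edge

/-- A minimal alternating cycle: one containing no proper alternating subcycle. -/
def AltCycle.Minimal {V : Type*} [DecidableEq V] {E : Finset (MEdge V)} (C : AltCycle E) : Prop :=
  ∀ C' : AltCycle E, C'.edges ⊆ C.edges → C'.edges = C.edges

/-- `|f_{X,t}(M(H0 Δ H*))|`: the number of edges of `M(H0 Δ H*)` labeled with
hypergraph `l` (`true = H0`) and tail `t`. -/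
def labTailCount {V : Type*} [DecidableEq V] (A0 A1 : Finset (Hyperarc V))
    (l : Bool) (t : Tail) : ℕ :=
  ((mEdges A0 A1).filter fun e => e.lab = l ∧ e.tail = t).card

/-- `H` and `H'` differ by a single hypershuffle move, i.e. they are adjacent in
`G(H^stub_s(d))`: their symmetric difference consists of 4 hyperarcs,
`M(H Δ H')` is an alternating cycle, and the number of tail-τ edges labeled `H`
equals the number of tail-τ edges labeled `H'`. -/
def HypershuffleAdj {V : Type*} [DecidableEq V] (A0 A1 : Finset (Hyperarc V)) : Prop :=
  ((A0 \ A1) ∪ (A1 \ A0)).card = 4 ∧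
  (∃ C : AltCycle (mEdges A0 A1), C.edges = mEdges A0 A1) ∧
  labTailCount A0 A1 true true = labTailCount A0 A1 false true

/-!
Replacing the arcs `(t,{a,b})`, `(s,{c,d})` of `H0` by `(t,{b,c})`, `(s,{a,d})` keeps every
vertex degree (both pairs of pairs cover `a, b, c, d` once each, as consecutive sides of a
closed path with `a ≠ b`, `b ≠ c`, `c ≠ d`, `d ≠ a`) and every tail count. So `H̃` realizes `d`
and differs from `H0` in exactly these four arcs. Towards `H*` the move deletes the two
`H0`-arcs `e1, e3` of the difference, makes `e2` common and adds the single new arc `(s,{a,d})`,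
a net loss of two. The arcs `e1` and `e3` are distinct because they sit two steps apart on a
cycle of length at least five.
-/

section Exchange

variable {α : Type*} [DecidableEq α] {A B S T : Finset α}

lemma card_filter_sdiff_union (hS : S ⊆ A) (hT : Disjoint A T) (p : α → Prop)
    [DecidablePred p] (hp : #(S.filter p) = #(T.filter p)) :
    #((A \ S ∪ T).filter p) = #(A.filter p) := by
  have hST : Disjoint (A \ S) T := disjoint_of_subset_left sdiff_subset hT
  have hSp : #((A \ S).filter p) + #(S.filter p) = #(A.filter p) := by
    rw [← card_union_of_disjoint (disjoint_filter_filter sdiff_disjoint), ← filter_union,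
      sdiff_union_of_subset hS]
  rw [filter_union, card_union_of_disjoint (disjoint_filter_filter hST), ← hp, hSp]

lemma sdiff_sdiff_union (hS : S ⊆ A) (hT : Disjoint A T) : A \ (A \ S ∪ T) = S := by
  grind [disjoint_left]

lemma sdiff_union_sdiff (hT : Disjoint A T) : (A \ S ∪ T) \ A = T := by
  grind [disjoint_left]

end Exchange

section MEdges

variable {V : Type*} [DecidableEq V] {A B S T : Finset (Hyperarc V)}

lemma card_mEdges (A B : Finset (Hyperarc V)) :
    #(mEdges A B) = #(A \ B) + #(B \ A) := by
  have hinj (l : Bool) : Function.Injective fun h : Hyperarc V => (⟨l, h.1, h.2⟩ : MEdge V) :=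
    fun x y h => by cases x; cases y; cases h; rfl
  rw [mEdges, card_union_of_disjoint, card_image_of_injective _ (hinj true),
    card_image_of_injective _ (hinj false)]
  simp only [disjoint_left, mem_image, not_exists, not_and]
  rintro _ ⟨x, -, rfl⟩ y - h
  cases h

@[simp]
lemma mk_true_mem_mEdges {t : Tail} {p : Sym2 V} :
    (⟨true, t, p⟩ : MEdge V) ∈ mEdges A B ↔ (t, p) ∈ A ∧ (t, p) ∉ B := by
  simp [mEdges]

@[simp]
lemma mk_false_mem_mEdges {t : Tail} {p : Sym2 V} :
    (⟨false, t, p⟩ : MEdge V) ∈ mEdges A B ↔ (t, p) ∈ B ∧ (t, p) ∉ A := by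
  simp [mEdges]

lemma card_mEdges_sdiff_union_left (hS : S ⊆ A) (hT : Disjoint A T) :
    #(mEdges A (A \ S ∪ T)) = #S + #T := by
  rw [card_mEdges, sdiff_sdiff_union hS hT, sdiff_union_sdiff hT]

lemma card_mEdges_sdiff_union_add (hS : S ⊆ A \ B) (hT : Disjoint A T) :
    #(mEdges (A \ S ∪ T) B) + #S + #(T ∩ B) = #(mEdges A B) + #(T \ B) := by
  have hleft : (A \ S ∪ T) \ B = (A \ B) \ S ∪ T \ B := by grind
  have hright : B \ (A \ S ∪ T) = (B \ A) \ (T ∩ B) := by grind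
  have hTB : T ∩ B ⊆ B \ A := by grind [disjoint_left]
  have hdisj : Disjoint ((A \ B) \ S) (T \ B) := by grind [disjoint_left]
  rw [card_mEdges, card_mEdges, hleft, hright, card_union_of_disjoint hdisj]
  have := card_sdiff_add_card_eq_card hS
  have := card_sdiff_add_card_eq_card hTB
  omega

end MEdges

namespace AltCycle

variable {V : Type*} {E : Finset (MEdge V)} (C : AltCycle E)

lemma card_edges_le [DecidableEq V] : #C.edges ≤ C.n := by
  simpa [edges] using card_image_le (s := range C.n) (f := C.edge)

lemma edge_add_ne {j : ℕ} (hj : 0 < j) (hjn : j < C.n) (i : ℕ) :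
    C.edge (i + j) ≠ C.edge i := by
  intro h
  have hper : Function.Periodic C.edge C.n := C.edge_periodic
  have hpos : 0 < C.n := by omega
  have hmod := C.inj ((i + j) % C.n) (Nat.mod_lt _ hpos) (i % C.n) (Nat.mod_lt _ hpos)
    (by rw [hper.map_mod_nat, hper.map_mod_nat, h])
  have hj0 : j ≡ 0 [MOD C.n] := Nat.ModEq.add_left_cancel' i (by simpa [Nat.ModEq] using hmod)
  rw [Nat.ModEq, Nat.zero_mod, Nat.mod_eq_of_lt hjn] at hj0
  omega

end AltCycle

section Realizes

variable {V : Type*} [DecidableEq V] {D : DegreeSeq V} {A S T : Finset (Hyperarc V)}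

lemma Realizes.sdiff_union (hA : Realizes A D) (hS : S ⊆ A) (hT : Disjoint A T)
    (hTdiag : ∀ e ∈ T, ¬ e.2.IsDiag)
    (hvert : ∀ v, #(S.filter (v ∈ ·.2)) = #(T.filter (v ∈ ·.2)))
    (htail : ∀ t, #(S.filter (·.1 = t)) = #(T.filter (·.1 = t))) :
    Realizes (A \ S ∪ T) D := by
  refine ⟨fun e he => ?_, fun v => ?_, fun t => ?_⟩
  · rcases mem_union.1 he with he | he
    exacts [hA.1 e (mem_sdiff.1 he).1, hTdiag e he]
  · rw [card_filter_sdiff_union hS hT _ (hvert v), hA.2.1 v]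
  · rw [card_filter_sdiff_union hS hT _ (htail t), hA.2.2 t]

variable {a b c d : V} {t s : Tail}

lemma card_filter_mem_path_eq (hab : a ≠ b) (hbc : b ≠ c) (hcd : c ≠ d) (had : a ≠ d)
    (h13 : (t, s(a, b)) ≠ (s, s(c, d))) (h24 : (t, s(b, c)) ≠ (s, s(a, d))) (v : V) :
    #(({(t, s(a, b)), (s, s(c, d))} : Finset (Hyperarc V)).filter (v ∈ ·.2)) =
      #(({(t, s(b, c)), (s, s(a, d))} : Finset (Hyperarc V)).filter (v ∈ ·.2)) := by
  simp only [card_filter, sum_pair h13, sum_pair h24, Sym2.mem_iff]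
  grind

lemma Realizes.rotate (hA : Realizes A D) (h1 : (t, s(a, b)) ∈ A) (h3 : (s, s(c, d)) ∈ A)
    (h13 : (t, s(a, b)) ≠ (s, s(c, d))) (h2 : (t, s(b, c)) ∉ A) (h4 : (s, s(a, d)) ∉ A)
    (h24 : (t, s(b, c)) ≠ (s, s(a, d))) (hbc : b ≠ c) (had : a ≠ d) :
    Realizes (A \ {(t, s(a, b)), (s, s(c, d))} ∪ {(t, s(b, c)), (s, s(a, d))}) D := by
  have hab : a ≠ b := fun h => hA.1 _ h1 (by simp [h])
  have hcd : c ≠ d := fun h => hA.1 _ h3 (by simp [h])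
  refine hA.sdiff_union (by simp [insert_subset_iff, h1, h3]) (by simp [h2, h4]) ?_
    (card_filter_mem_path_eq hab hbc hcd had h13 h24) fun t' => ?_
  · simp [hbc, had]
  · simp only [card_filter, sum_pair h13, sum_pair h24]

end Realizes

theorem one_cycle_case2_general {V : Type*} [DecidableEq V]
    (D : DegreeSeq V) (A0 A1 : Finset (Hyperarc V))
    (h0 : Realizes A0 D) (h1 : Realizes A1 D) (k : ℕ)
    (hcard : (mEdges A0 A1).card = k + 1) (hk : 5 ≤ k + 1)
    (C : AltCycle (mEdges A0 A1)) (hall : C.edges = mEdges A0 A1)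
    (a b c d : V) (t s : Tail) (i : ℕ)
    (he1 : C.edge i = ⟨true, t, s(a, b)⟩)
    (he2 : C.edge (i + 1) = ⟨false, t, s(b, c)⟩)
    (he3 : C.edge (i + 2) = ⟨true, s, s(c, d)⟩)
    (had : a ≠ d)
    (he4 : (s, s(a, d)) ∉ A0 ∪ A1)
    (At : Finset (Hyperarc V))
    (hAt : At = (A0 \ {(t, s(a, b)), (s, s(c, d))}) ∪ {(t, s(b, c)), (s, s(a, d))}) :
    Realizes At D ∧ (mEdges A0 At).card ≤ k ∧ (mEdges At A1).card = k - 1 := by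
  have m1 : (t, s(a, b)) ∈ A0 ∧ (t, s(a, b)) ∉ A1 := by simpa [he1] using C.mem i
  have m2 : (t, s(b, c)) ∈ A1 ∧ (t, s(b, c)) ∉ A0 := by simpa [he2] using C.mem (i + 1)
  have m3 : (s, s(c, d)) ∈ A0 ∧ (s, s(c, d)) ∉ A1 := by simpa [he3] using C.mem (i + 2)
  obtain ⟨m4A0, m4A1⟩ : (s, s(a, d)) ∉ A0 ∧ (s, s(a, d)) ∉ A1 := by simpa using he4
  have hn : k + 1 ≤ C.n := hcard ▸ (congrArg card hall).symm ▸ C.card_edges_le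
  have h13 : (t, s(a, b)) ≠ (s, s(c, d)) := by
    intro h
    obtain ⟨rfl, hp⟩ := Prod.mk.inj h
    exact C.edge_add_ne two_pos (by omega) i (by rw [he1, he3, hp])
  have h24 : (t, s(b, c)) ≠ (s, s(a, d)) := fun h => m4A1 (h ▸ m2.1)
  have hS : {(t, s(a, b)), (s, s(c, d))} ⊆ A0 \ A1 := by simp [insert_subset_iff, m1, m3]
  have hT : Disjoint A0 {(t, s(b, c)), (s, s(a, d))} := by simp [m2.2, m4A0]
  have hT_inter : {(t, s(b, c)), (s, s(a, d))} ∩ A1 = {(t, s(b, c))} := by grind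
  have hT_sdiff : {(t, s(b, c)), (s, s(a, d))} \ A1 = {(s, s(a, d))} := by grind
  have hS2 := card_pair h13
  have hT2 := card_pair h24
  subst hAt
  refine ⟨h0.rotate m1.1 m3.1 h13 m2.2 m4A0 h24 (fun h => h1.1 _ m2.1 (by simp [h])) had,
    ?_, ?_⟩
  · rw [card_mEdges_sdiff_union_left (hS.trans sdiff_subset) hT]
    omega
  · have := card_mEdges_sdiff_union_add hS hT
    rw [hT_inter, hT_sdiff, card_singleton, card_singleton] at this
    omega

/-- Case 2 of the proof of Lemma `connected_when_one_cycle`.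
`M(H0 Δ H*)` has `k + 1 ≥ 5` edges and is exactly one minimal alternating cycle
`C*` with subtrail `(e1, e2, e3)`, `e1 = {a,b}_{H0,t}`, `e2 = {b,c}_{H*,t}`,
`e3 = {c,d}_{H0,s}`, `a ≠ d`.  If `(s,{a,d}) ∉ A(H0) ∪ A(H*)`, then `H̃` with
`A(H̃) = (A(H0) \ {M⁻¹(e1), M⁻¹(e3)}) ∪ {M⁻¹(e2), (s,{a,d})}` satisfies
`H̃ ∈ H^stub_s(d)`, `E(M(H0 Δ H̃)) ≤ k` and `E(M(H̃ Δ H*)) = k − 1`. -/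
theorem one_cycle_case2 {V : Type*} [DecidableEq V]
    (D : DegreeSeq V) (A0 A1 : Finset (Hyperarc V))
    (h0 : Realizes A0 D) (h1 : Realizes A1 D) (k : ℕ)
    (hcard : (mEdges A0 A1).card = k + 1) (hk : 5 ≤ k + 1)
    (C : AltCycle (mEdges A0 A1)) (hmin : C.Minimal) (hall : C.edges = mEdges A0 A1)
    (a b c d : V) (t s : Tail) (i : ℕ)
    (he1 : C.edge i = ⟨true, t, s(a, b)⟩)
    (he2 : C.edge (i + 1) = ⟨false, t, s(b, c)⟩)
    (he3 : C.edge (i + 2) = ⟨true, s, s(c, d)⟩)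
    (had : a ≠ d)
    (he4 : (s, s(a, d)) ∉ A0 ∪ A1)
    (At : Finset (Hyperarc V))
    (hAt : At = (A0 \ {(t, s(a, b)), (s, s(c, d))}) ∪ {(t, s(b, c)), (s, s(a, d))}) :
    Realizes At D ∧ (mEdges A0 At).card ≤ k ∧ (mEdges At A1).card = k - 1 :=
  one_cycle_case2_general D A0 A1 h0 h1 k hcard hk C hall a b c d t s i he1 he2 he3 had he4 At hAt
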